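/- arXiv:1204.4014 — 2 statements merged into one kernel-verified Lean document; each statement's English description precedes it below -/
import Mathlib

section
/- Let G₁ and G₂ be connected graphs. The Kronecker product G₁ ⊗ G₂ is connected if and only if G₁ or G₂ contains an odd cycle. -/
/-- Existence of a walk of length `k` from `x` to `y` in the graph with adjacency
relation `adj` (loops allowed, no parallel edges). -/
def GWalk {V : Type*} (adj : V → V → Prop) : ℕ → V → V → Prop
  | 0, x, y => x = y
  | k + 1, x, y => ∃ z, adj x z ∧ GWalk adj k z y

/-- Distance: the length of a shortest walk (= shortest path) from `x` to `y`. -/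
noncomputable def GDist {V : Type*} (adj : V → V → Prop) (x y : V) : ℕ :=
  sInf {k | GWalk adj k x y}

/-- The graph is connected: any two vertices are joined by some walk. -/
def GConnected {V : Type*} (adj : V → V → Prop) : Prop :=
  ∀ x y, ∃ k, GWalk adj k x y

/-- The graph contains a closed walk of odd length (an "odd cycle"). -/
def HasOddClosedWalk {V : Type*} (adj : V → V → Prop) : Prop :=
  ∃ (x : V) (k : ℕ), Odd k ∧ GWalk adj k x x

/-- The graph is primitive: some `γ` works as an exponent. -/
def GPrimitive {V : Type*} (adj : V → V → Prop) : Prop :=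
  ∃ γ : ℕ, ∀ x y : V, ∀ k ≥ γ, GWalk adj k x y

/-- Adjacency of the Kronecker (tensor) product. -/
def KronAdj {V₁ V₂ : Type*} (adj₁ : V₁ → V₁ → Prop) (adj₂ : V₂ → V₂ → Prop) :
    V₁ × V₂ → V₁ × V₂ → Prop :=
  fun a b => adj₁ a.1 b.1 ∧ adj₂ a.2 b.2

section Aux

variable {V : Type*} {adj : V → V → Prop}

lemma gwalk_append : ∀ {k l : ℕ} {x y z : V},
    GWalk adj k x y → GWalk adj l y z → GWalk adj (k + l) x z
  | 0, l, x, y, z, h1, h2 => by cases h1; simpa [Nat.zero_add] using h2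
  | k+1, l, x, y, z, ⟨w, hw, h1⟩, h2 => by
      rw [Nat.succ_add]
      exact ⟨w, hw, gwalk_append h1 h2⟩

lemma gwalk_rev (hs : Symmetric adj) : ∀ {k : ℕ} {x y : V},
    GWalk adj k x y → GWalk adj k y x
  | 0, x, y, h => h.symm
  | k+1, x, y, ⟨w, hw, h⟩ =>
      gwalk_append (gwalk_rev hs h) ⟨x, hs hw, rfl⟩

lemma gwalk_add_two {k : ℕ} {x y z : V} (hz : adj x z) (hs : Symmetric adj)
    (h : GWalk adj k x y) : GWalk adj (k + 2) x y := by
  have h2 : GWalk adj (2 + k) x y :=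
    gwalk_append (k := 2) (⟨z, hz, x, hs hz, rfl⟩ : GWalk adj 2 x x) h
  rwa [Nat.add_comm] at h2

lemma gwalk_add_even {k : ℕ} {x y z : V} (hz : adj x z) (hs : Symmetric adj)
    (h : GWalk adj k x y) : ∀ t : ℕ, GWalk adj (k + 2 * t) x y
  | 0 => by simpa using h
  | t+1 => by
      have := gwalk_add_two hz hs (gwalk_add_even hz hs h t)
      have e : k + 2 * t + 2 = k + 2 * (t + 1) := by ring
      rwa [e] at this

lemma exists_neighbor [Nontrivial V] (hc : GConnected adj) (x : V) :
    ∃ z, adj x z := by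
  obtain ⟨y, hy⟩ := exists_ne x
  obtain ⟨k, hk⟩ := hc x y
  cases k with
  | zero => exact absurd hk.symm hy
  | succ k => obtain ⟨z, hz, _⟩ := hk; exact ⟨z, hz⟩

lemma kron_walk_iff {V₁ V₂ : Type*} {adj₁ : V₁ → V₁ → Prop} {adj₂ : V₂ → V₂ → Prop} :
    ∀ {k : ℕ} {a b : V₁ × V₂},
      GWalk (KronAdj adj₁ adj₂) k a b ↔ GWalk adj₁ k a.1 b.1 ∧ GWalk adj₂ k a.2 b.2
  | 0, a, b => by
      constructor
      · rintro rfl; exact ⟨rfl, rfl⟩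
      · rintro ⟨h1, h2⟩; exact Prod.ext h1 h2
  | k+1, a, b => by
      constructor
      · rintro ⟨z, ⟨hz1, hz2⟩, hw⟩
        obtain ⟨hw1, hw2⟩ := kron_walk_iff.mp hw
        exact ⟨⟨z.1, hz1, hw1⟩, ⟨z.2, hz2, hw2⟩⟩
      · rintro ⟨⟨z1, hz1, hw1⟩, ⟨z2, hz2, hw2⟩⟩
        exact ⟨(z1, z2), ⟨hz1, hz2⟩, kron_walk_iff.mpr ⟨hw1, hw2⟩⟩

/-- Key lemma: if `adj₁` has an odd closed walk, any two pairs of vertices are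
joined by walks of a common length. -/
lemma common_length {V₁ V₂ : Type*} [Nontrivial V₁] [Nontrivial V₂]
    {adj₁ : V₁ → V₁ → Prop} {adj₂ : V₂ → V₂ → Prop}
    (hsymm₁ : Symmetric adj₁) (hsymm₂ : Symmetric adj₂)
    (hc₁ : GConnected adj₁) (hc₂ : GConnected adj₂)
    (hodd : HasOddClosedWalk adj₁) (x₁ y₁ : V₁) (x₂ y₂ : V₂) :
    ∃ k, GWalk adj₁ k x₁ y₁ ∧ GWalk adj₂ k x₂ y₂ := by
  obtain ⟨w, m, hm, hwm⟩ := hodd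
  obtain ⟨a, ha⟩ := hc₁ x₁ w
  obtain ⟨b, hb⟩ := hc₁ w y₁
  obtain ⟨k₂, hk₂⟩ := hc₂ x₂ y₂
  obtain ⟨z₁, hz₁⟩ := exists_neighbor hc₁ x₁
  obtain ⟨z₂, hz₂⟩ := exists_neighbor hc₂ x₂
  -- two walks in G₁ of opposite parities
  have hw0 : GWalk adj₁ (a + b) x₁ y₁ := gwalk_append ha hb
  have hw1 : GWalk adj₁ (a + (m + b)) x₁ y₁ := gwalk_append ha (gwalk_append hwm hb)
  -- choose c with c ≡ k₂ [MOD 2]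
  obtain ⟨c, hc, hpar⟩ : ∃ c, GWalk adj₁ c x₁ y₁ ∧ c % 2 = k₂ % 2 := by
    rcases Nat.even_or_odd (a + b + k₂) with ⟨p, hp⟩ | ⟨p, hp⟩
    · exact ⟨a + b, hw0, by omega⟩
    · refine ⟨a + (m + b), hw1, ?_⟩
      obtain ⟨m', hm'⟩ := hm
      omega
  set k := max c k₂ with hk
  refine ⟨k, ?_, ?_⟩
  · obtain ⟨t, ht⟩ : ∃ t, k = c + 2 * t := ⟨(k - c) / 2, by omega⟩
    rw [ht]; exact gwalk_add_even hz₁ hsymm₁ hc t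
  · obtain ⟨t, ht⟩ : ∃ t, k = k₂ + 2 * t := ⟨(k - k₂) / 2, by omega⟩
    rw [ht]; exact gwalk_add_even hz₂ hsymm₂ hk₂ t

end Aux

theorem stmt3 {V₁ V₂ : Type*} [Nontrivial V₁] [Nontrivial V₂]
    (adj₁ : V₁ → V₁ → Prop) (adj₂ : V₂ → V₂ → Prop)
    (hsymm₁ : Symmetric adj₁) (hsymm₂ : Symmetric adj₂)
    (hc₁ : GConnected adj₁) (hc₂ : GConnected adj₂) :
    GConnected (KronAdj adj₁ adj₂) ↔ HasOddClosedWalk adj₁ ∨ HasOddClosedWalk adj₂ := by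
  constructor
  · intro hconn
    by_contra hno
    push_neg at hno
    obtain ⟨hno₁, hno₂⟩ := hno
    obtain ⟨x₁, hx₁⟩ : ∃ x₁ : V₁, True := ⟨Classical.arbitrary V₁, trivial⟩
    obtain ⟨z₁, hz₁⟩ := exists_neighbor hc₁ x₁
    obtain ⟨x₂, hx₂⟩ : ∃ x₂ : V₂, True := ⟨Classical.arbitrary V₂, trivial⟩
    obtain ⟨k, hk⟩ := hconn (x₁, x₂) (z₁, x₂)
    obtain ⟨hk1, hk2⟩ := kron_walk_iff.mp hk
    rcases Nat.even_or_odd k with he | ho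
    · -- closed odd walk in G₁ of length k + 1
      exact hno₁ ⟨x₁, k + 1, by rcases he with ⟨m, hm⟩; exact ⟨m, by omega⟩,
        gwalk_append hk1 (⟨x₁, hsymm₁ hz₁, rfl⟩ : GWalk adj₁ 1 z₁ x₁)⟩
    · exact hno₂ ⟨x₂, k, ho, hk2⟩
  · rintro (h | h) ⟨x₁, x₂⟩ ⟨y₁, y₂⟩
    · obtain ⟨k, h1, h2⟩ := common_length hsymm₁ hsymm₂ hc₁ hc₂ h x₁ y₁ x₂ y₂
      exact ⟨k, kron_walk_iff.mpr ⟨h1, h2⟩⟩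
    · obtain ⟨k, h2, h1⟩ := common_length hsymm₂ hsymm₁ hc₂ hc₁ h x₂ y₂ x₁ y₁
      exact ⟨k, kron_walk_iff.mpr ⟨h1, h2⟩⟩
end

section
/- Let G be a primitive graph of order n ≥ 2 with exponent γ(G). Then γ(G) = d(G ⊗ K₂) − 1, where K₂ is the complete graph on two vertices and d denotes diameter. -/
lemma gwalk_concat {V : Type*} {adj : V → V → Prop} :
    ∀ {k m : ℕ} {x y z : V}, GWalk adj k x y → GWalk adj m y z → GWalk adj (k + m) x z := by
  intro k
  induction k with
  | zero => intro m x y z h1 h2; simp only [GWalk] at h1; subst h1; simpa using h2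
  | succ k ih =>
    intro m x y z h1 h2
    obtain ⟨w, hw, h1⟩ := h1
    rw [Nat.add_right_comm k 1 m]
    exact ⟨w, hw, ih h1 h2⟩

lemma boolwalk_iff : ∀ (k : ℕ) (s t : Bool),
    GWalk (fun s t : Bool => s ≠ t) k s t ↔ (Even k ↔ s = t) := by
  intro k
  induction k with
  | zero => intro s t; simp [GWalk]
  | succ k ih =>
    intro s t
    constructor
    · rintro ⟨z, hz, hw⟩
      have := (ih z t).1 hw
      rw [Nat.even_add_one]
      cases s <;> cases z <;> cases t <;> simp_all
    · intro h
      refine ⟨!s, by cases s <;> simp, (ih (!s) t).2 ?_⟩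
      rw [Nat.even_add_one] at h
      cases s <;> cases t <;> simp_all

lemma kronwalk_iff {V₁ V₂ : Type*} {a : V₁ → V₁ → Prop} {b : V₂ → V₂ → Prop} :
    ∀ (k : ℕ) (p q : V₁ × V₂),
    GWalk (KronAdj a b) k p q ↔ GWalk a k p.1 q.1 ∧ GWalk b k p.2 q.2 := by
  intro k
  induction k with
  | zero => intro p q; simp [GWalk, Prod.ext_iff]
  | succ k ih =>
    intro p q
    constructor
    · rintro ⟨z, ⟨h1, h2⟩, hw⟩
      obtain ⟨w1, w2⟩ := (ih z q).1 hw
      exact ⟨⟨z.1, h1, w1⟩, ⟨z.2, h2, w2⟩⟩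
    · rintro ⟨⟨z1, h1, w1⟩, ⟨z2, h2, w2⟩⟩
      exact ⟨(z1, z2), ⟨h1, h2⟩, (ih (z1, z2) q).2 ⟨w1, w2⟩⟩

theorem stmt19 {V : Type*} [Fintype V] (adj : V → V → Prop)
    (hsymm : Symmetric adj) (hn : 2 ≤ Fintype.card V)
    (hprim : GPrimitive adj) (γ D : ℕ)
    (hγ : IsLeast {m : ℕ | ∀ x y : V, ∀ k ≥ m, GWalk adj k x y} γ)
    (hD : IsGreatest {m : ℕ | ∃ x y : V × Bool,
        m = GDist (KronAdj adj (fun s t : Bool => s ≠ t)) x y} D) :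
    γ = D - 1 := by
  classical
  obtain ⟨a, b, hab⟩ := Fintype.one_lt_card_iff.mp (show 1 < Fintype.card V by omega)
  -- γ ≥ 1
  have hγ1 : 1 ≤ γ := by
    rcases Nat.eq_zero_or_pos γ with h0 | h; swap; · exact h
    exfalso
    have := hγ.1 a b 0 (by omega)
    simp only [GWalk] at this
    exact hab this
  -- every vertex has a neighbor
  have hnbr : ∀ v : V, ∃ z, adj v z := by
    intro v
    have := hγ.1 v v γ le_rfl
    obtain ⟨γ', rfl⟩ : ∃ γ', γ = γ' + 1 := ⟨γ - 1, by omega⟩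
    obtain ⟨z, hz, _⟩ := this
    exact ⟨z, hz⟩
  -- walks can be extended by 2
  have step2 : ∀ (k : ℕ) (x y : V), GWalk adj k x y → GWalk adj (k + 2) x y := by
    intro k x y h
    obtain ⟨z, hz⟩ := hnbr y
    exact gwalk_concat h ⟨z, hz, y, hsymm hz, rfl⟩
  have stepEven : ∀ (j k : ℕ) (x y : V), GWalk adj k x y → GWalk adj (k + 2 * j) x y := by
    intro j
    induction j with
    | zero => simp only [Nat.mul_zero, Nat.add_zero]; exact fun k x y h => h
    | succ j ih =>
      intro k x y h
      have := step2 _ _ _ (ih k x y h)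
      have e : k + 2 * (j + 1) = k + 2 * j + 2 := by ring
      rwa [e]
  -- there is a pair with no walk of length γ - 1
  have hnot : ¬ (γ - 1) ∈ {m : ℕ | ∀ x y : V, ∀ k ≥ m, GWalk adj k x y} := by
    intro h
    have := hγ.2 h
    omega
  simp only [Set.mem_setOf_eq] at hnot
  push_neg at hnot
  obtain ⟨x, y, k, hk, hnw⟩ := hnot
  have hkeq : k = γ - 1 := by
    by_contra h
    exact hnw (hγ.1 x y k (by omega))
  subst hkeq
  -- the special target parity
  set t : Bool := decide (Even (γ - 1)) with ht
  have ht' : (true = t) ↔ Even (γ - 1) := by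
    rw [ht]; constructor
    · intro h; exact of_decide_eq_true h.symm
    · intro h; simp [decide_eq_true h]
  set B : Bool → Bool → Prop := fun s t => s ≠ t with hB
  -- the distance from (x, true) to (y, t) is exactly γ + 1
  have hleast : IsLeast {m : ℕ | GWalk (KronAdj adj B) m (x, true) (y, t)} (γ + 1) := by
    constructor
    · rw [Set.mem_setOf_eq, kronwalk_iff]
      refine ⟨hγ.1 x y (γ + 1) (by omega), (boolwalk_iff _ _ _).2 ?_⟩
      rw [ht']
      rw [Nat.even_iff, Nat.even_iff]
      omega
    · intro m hm
      rw [Set.mem_setOf_eq, kronwalk_iff] at hm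
      obtain ⟨hw, hbw⟩ := hm
      have hpar : Even m ↔ Even (γ - 1) := by
        rw [← ht']; exact (boolwalk_iff _ _ _).1 hbw
      by_contra hlt
      push_neg at hlt
      have hm' : m ≤ γ - 1 := by
        rw [Nat.even_iff, Nat.even_iff] at hpar
        omega
      obtain ⟨j, hj⟩ : ∃ j, γ - 1 = m + 2 * j := by
        rw [Nat.even_iff, Nat.even_iff] at hpar
        exact ⟨(γ - 1 - m) / 2, by omega⟩
      exact hnw (hj ▸ stepEven j m x y hw)
  have hdist : GDist (KronAdj adj B) (x, true) (y, t) = γ + 1 := by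
    unfold GDist
    exact hleast.csInf_eq
  -- lower bound: γ + 1 ≤ D
  have h1 : γ + 1 ≤ D := hD.2 ⟨(x, true), (y, t), hdist.symm⟩
  -- upper bound: every distance is ≤ γ + 1
  have h2 : D ≤ γ + 1 := by
    obtain ⟨p, q, hpq⟩ := hD.1
    rw [hpq]
    unfold GDist
    by_cases hc : Even γ ↔ p.2 = q.2
    · have : γ ∈ {k | GWalk (KronAdj adj B) k p q} := by
        rw [Set.mem_setOf_eq, kronwalk_iff]
        exact ⟨hγ.1 _ _ γ le_rfl, (boolwalk_iff _ _ _).2 hc⟩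
      exact le_trans (Nat.sInf_le this) (by omega)
    · have : γ + 1 ∈ {k | GWalk (KronAdj adj B) k p q} := by
        rw [Set.mem_setOf_eq, kronwalk_iff]
        refine ⟨hγ.1 _ _ (γ + 1) (by omega), (boolwalk_iff _ _ _).2 ?_⟩
        rw [Nat.even_add_one]
        by_cases h2 : p.2 = q.2 <;> by_cases h3 : Even γ <;> tauto
      exact Nat.sInf_le this
  omega
end
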